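/- Assume φ: A → A is surjective. Let (M, α_M) →^i (K, α_K) →^σ (L, α_L) be a central extension of hom-Lie-Rinehart algebras over (A, φ). If this central extension is a universal α-central extension, then (K, α_K) is perfect and every central extension of (K, α_K) splits uniquely in the category of hom-Lie-Rinehart algebras over (A, φ), i.e. for every central extension (N, α_N) →^j (L', α_{L'}) →^τ (K, α_K) there exists a unique homomorphism s: (K, α_K) → (L', α_{L'}) over (A, φ) with τ ∘ s = Id_K. -/

import Mathlib

/-!
Perfectness: `K × K/{K, K} → L` (bracket from the first factor, twist map induced on the
quotient) is an `α`-central extension of `L`, and both `x ↦ (x, 0)` and `x ↦ (x, x mod {K, K})`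
lift `σ` through it; uniqueness of lifts forces `{K, K} = K`.

Splitting: for a central extension `τ : L' → K`, the composite `σ ∘ τ` is `α`-central. For
`x ∈ ker (σ ∘ τ)` the anchor of `α x` vanishes because `φ` is surjective, and `[α x, -]` kills
brackets by hom-Jacobi and kills the central `ker τ`; these span `L'` because `K` is perfect.
The universal property gives `s : K → L'` over `L`. Now `τ ∘ s` and `id_K` both lift `σ` along
`σ`, so `τ ∘ s = id`, and every section of `τ` lifts `σ` along `σ ∘ τ`, so it equals `s`.
-/

open TensorProduct Function Set

/-- A hom-Lie-Rinehart algebra structure over `(A, φ)` on the `A`-module `L`. -/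
structure HLR (R A : Type) [CommRing R] [CommRing A] [Algebra R A]
    (φ : A →ₐ[R] A) (L : Type) [AddCommGroup L] [Module R L]
    [Module A L] [IsScalarTower R A L] : Type where
  bracket : L → L → L
  add_left : ∀ x y z, bracket (x + y) z = bracket x z + bracket y z
  add_right : ∀ x y z, bracket x (y + z) = bracket x y + bracket x z
  smul_left : ∀ (r : R) (x y : L), bracket (r • x) y = r • bracket x y
  smul_right : ∀ (r : R) (x y : L), bracket x (r • y) = r • bracket x y
  skew : ∀ x y, bracket x y = - bracket y x
  alpha : L → L
  alpha_add : ∀ x y, alpha (x + y) = alpha x + alpha y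
  alpha_smulR : ∀ (r : R) (x : L), alpha (r • x) = r • alpha x
  rho : L → A → A
  rho_add_left : ∀ x y a, rho (x + y) a = rho x a + rho y a
  rho_smulR_left : ∀ (r : R) (x : L) (a : A), rho (r • x) a = r • rho x a
  rho_add_right : ∀ (x : L) (a b : A), rho x (a + b) = rho x a + rho x b
  rho_smulR_right : ∀ (x : L) (r : R) (a : A), rho x (r • a) = r • rho x a
  rho_deriv : ∀ (x : L) (a b : A), rho x (a * b) = φ a * rho x b + φ b * rho x a
  alpha_bracket : ∀ x y, alpha (bracket x y) = bracket (alpha x) (alpha y)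
  hom_jacobi : ∀ x y z, bracket (alpha x) (bracket y z)
      + bracket (alpha y) (bracket z x) + bracket (alpha z) (bracket x y) = 0
  alpha_smulA : ∀ (a : A) (x : L), alpha (a • x) = φ a • alpha x
  rho_alpha : ∀ (x : L) (a : A), rho (alpha x) (φ a) = φ (rho x a)
  rho_bracket : ∀ (x y : L) (a : A), rho (bracket x y) (φ a)
      = rho (alpha x) (rho y a) - rho (alpha y) (rho x a)
  rho_smulA : ∀ (a : A) (x : L) (b : A), rho (a • x) b = φ a * rho x b
  leibniz : ∀ (x : L) (a : A) (y : L),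
      bracket x (a • y) = φ a • bracket x y + rho x a • alpha y

section Defs

variable {R A : Type} [CommRing R] [CommRing A] [Algebra R A] {φ : A →ₐ[R] A}

/-- Homomorphism of hom-Lie-Rinehart algebras over `(A, φ)`: an `A`-linear map
preserving brackets, the twist maps and the anchors. -/
def IsHLRHom {K L : Type}
    [AddCommGroup K] [Module R K] [Module A K] [IsScalarTower R A K]
    [AddCommGroup L] [Module R L] [Module A L] [IsScalarTower R A L]
    (SK : HLR R A φ K) (SL : HLR R A φ L) (f : K → L) : Prop :=
  (∀ x y, f (x + y) = f x + f y) ∧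
  (∀ (a : A) (x : K), f (a • x) = a • f x) ∧
  (∀ x y, f (SK.bracket x y) = SL.bracket (f x) (f y)) ∧
  (∀ x, f (SK.alpha x) = SL.alpha (f x)) ∧
  (∀ (x : K) (a : A), SL.rho (f x) a = SK.rho x a)

/-- The center `Z_A(L)` of a hom-Lie-Rinehart algebra. -/
def HLR.center {L : Type}
    [AddCommGroup L] [Module R L] [Module A L] [IsScalarTower R A L]
    (S : HLR R A φ L) : Set L :=
  {x | ∀ (a : A) (z : L),
    S.bracket (a • x) z = 0 ∧ S.bracket (a • S.alpha x) z = 0 ∧ S.rho x a = 0}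

/-- `(M, i) → (K, σ)` is a central extension of `L`. -/
def IsCentralExt {M K L : Type}
    [AddCommGroup M] [Module R M] [Module A M] [IsScalarTower R A M]
    [AddCommGroup K] [Module R K] [Module A K] [IsScalarTower R A K]
    [AddCommGroup L] [Module R L] [Module A L] [IsScalarTower R A L]
    (SM : HLR R A φ M) (SK : HLR R A φ K) (SL : HLR R A φ L)
    (i : M → K) (σ : K → L) : Prop :=
  IsHLRHom SM SK i ∧ IsHLRHom SK SL σ ∧ Function.Injective i ∧
  Function.Surjective σ ∧ Set.range i = {k | σ k = 0} ∧
  {k | σ k = 0} ⊆ SK.center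

/-- `(M, i) → (K, σ)` is an `α`-central extension of `L`. -/
def IsAlphaCentralExt {M K L : Type}
    [AddCommGroup M] [Module R M] [Module A M] [IsScalarTower R A M]
    [AddCommGroup K] [Module R K] [Module A K] [IsScalarTower R A K]
    [AddCommGroup L] [Module R L] [Module A L] [IsScalarTower R A L]
    (SM : HLR R A φ M) (SK : HLR R A φ K) (SL : HLR R A φ L)
    (i : M → K) (σ : K → L) : Prop :=
  IsHLRHom SM SK i ∧ IsHLRHom SK SL σ ∧ Function.Injective i ∧
  Function.Surjective σ ∧ Set.range i = {k | σ k = 0} ∧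
  (∀ m : M, i (SM.alpha m) ∈ SK.center)

/-- A hom-Lie-Rinehart algebra is perfect if `L = {L, L}`, the `A`-submodule
generated by all brackets. -/
def HLR.IsPerfect {L : Type}
    [AddCommGroup L] [Module R L] [Module A L] [IsScalarTower R A L]
    (S : HLR R A φ L) : Prop :=
  Submodule.span A {z : L | ∃ x y, z = S.bracket x y} = ⊤

/-- A hom-Lie-Rinehart algebra is `α`-perfect if `L = {α_L(L), α_L(L)}`. -/
def HLR.IsAlphaPerfect {L : Type}
    [AddCommGroup L] [Module R L] [Module A L] [IsScalarTower R A L]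
    (S : HLR R A φ L) : Prop :=
  Submodule.span A {z : L | ∃ x y, z = S.bracket (S.alpha x) (S.alpha y)} = ⊤

/-- Universal central extension. -/
def IsUniversalCentralExt {M K L : Type}
    [AddCommGroup M] [Module R M] [Module A M] [IsScalarTower R A M]
    [AddCommGroup K] [Module R K] [Module A K] [IsScalarTower R A K]
    [AddCommGroup L] [Module R L] [Module A L] [IsScalarTower R A L]
    (SM : HLR R A φ M) (SK : HLR R A φ K) (SL : HLR R A φ L)
    (i : M → K) (σ : K → L) : Prop :=
  IsCentralExt SM SK SL i σ ∧
  ∀ (M' L' : Type)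
    [AddCommGroup M'] [Module R M'] [Module A M'] [IsScalarTower R A M']
    [AddCommGroup L'] [Module R L'] [Module A L'] [IsScalarTower R A L']
    (SM' : HLR R A φ M') (SL' : HLR R A φ L') (j : M' → L') (τ : L' → L),
    IsCentralExt SM' SL' SL j τ →
    ∃! h : K → L', IsHLRHom SK SL' h ∧ ∀ x, τ (h x) = σ x

/-- Universal `α`-central extension. -/
def IsUniversalAlphaCentralExt {M K L : Type}
    [AddCommGroup M] [Module R M] [Module A M] [IsScalarTower R A M]
    [AddCommGroup K] [Module R K] [Module A K] [IsScalarTower R A K]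
    [AddCommGroup L] [Module R L] [Module A L] [IsScalarTower R A L]
    (SM : HLR R A φ M) (SK : HLR R A φ K) (SL : HLR R A φ L)
    (i : M → K) (σ : K → L) : Prop :=
  IsCentralExt SM SK SL i σ ∧
  ∀ (M' L' : Type)
    [AddCommGroup M'] [Module R M'] [Module A M'] [IsScalarTower R A M']
    [AddCommGroup L'] [Module R L'] [Module A L'] [IsScalarTower R A L']
    (SM' : HLR R A φ M') (SL' : HLR R A φ L') (j : M' → L') (τ : L' → L),
    IsAlphaCentralExt SM' SL' SL j τ →
    ∃! h : K → L', IsHLRHom SK SL' h ∧ ∀ x, τ (h x) = σ x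

end Defs

section UceDefs

variable {R A : Type} [CommRing R] [CommRing A] [Algebra R A] (φ : A →ₐ[R] A)
variable {L : Type} [AddCommGroup L] [Module R L] [Module A L] [IsScalarTower R A L]

/-- The `A`-submodule `M^φ_A L` of `A ⊗ L ⊗ L` of defining relations of `uce^φ_A L`. -/
def uceRel (S : HLR R A φ L) : Submodule A (A ⊗[R] (L ⊗[R] L)) :=
  Submodule.span A
    ({t | ∃ (a : A) (x : L), t = a ⊗ₜ[R] (x ⊗ₜ[R] x)} ∪
     {t | ∃ (a : A) (x y : L), t = a ⊗ₜ[R] (x ⊗ₜ[R] y) + a ⊗ₜ[R] (y ⊗ₜ[R] x)} ∪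
     {t | ∃ (a : A) (x y z : L), t =
        a ⊗ₜ[R] (S.alpha x ⊗ₜ[R] S.bracket y z)
          + a ⊗ₜ[R] (S.alpha y ⊗ₜ[R] S.bracket z x)
          + a ⊗ₜ[R] (S.alpha z ⊗ₜ[R] S.bracket x y)} ∪
     {t | ∃ (a : A) (x y x' y' : L), t =
        φ a ⊗ₜ[R] (S.bracket x y ⊗ₜ[R] S.bracket x' y')
          + S.rho (S.bracket x y) a ⊗ₜ[R] (S.alpha x' ⊗ₜ[R] S.alpha y')
          - (1 : A) ⊗ₜ[R] (S.bracket x y ⊗ₜ[R] (a • S.bracket x' y'))})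

/-- The underlying `A`-module of `uce^φ_A L`. -/
abbrev UCE (S : HLR R A φ L) : Type := (A ⊗[R] (L ⊗[R] L)) ⧸ uceRel φ S

/-- The coset `(a, x, y)` in `uce^φ_A L`. -/
noncomputable def uceMk (S : HLR R A φ L) (a : A) (x y : L) : UCE φ S :=
  Submodule.Quotient.mk (a ⊗ₜ[R] (x ⊗ₜ[R] y))

/-- `U` is the hom-Lie-Rinehart structure of `uce^φ_A L`: its bracket, twist map and anchor
are given by the defining formulas on cosets. -/
def IsUceStructure (S : HLR R A φ L) (U : HLR R A φ (UCE φ S)) : Prop :=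
  (∀ (a₁ a₂ : A) (x₁ y₁ x₂ y₂ : L),
    U.bracket (uceMk φ S a₁ x₁ y₁) (uceMk φ S a₂ x₂ y₂) =
      uceMk φ S (φ (a₁ * a₂)) (S.bracket x₁ y₁) (S.bracket x₂ y₂)
      + uceMk φ S (φ a₁ * S.rho (S.bracket x₁ y₁) a₂) (S.alpha x₂) (S.alpha y₂)
      - uceMk φ S (φ a₂ * S.rho (S.bracket x₂ y₂) a₁) (S.alpha x₁) (S.alpha y₁)) ∧
  (∀ (a : A) (x y : L),
    U.alpha (uceMk φ S a x y) = uceMk φ S (φ a) (S.alpha x) (S.alpha y)) ∧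
  (∀ (a b : A) (x y : L),
    U.rho (uceMk φ S a x y) b = φ a * S.rho (S.bracket x y) b)

/-- `u` is the canonical map `u_L : uce^φ_A L → L`, `(a,x,y) ↦ a • [x,y]`. -/
def IsUceMap (S : HLR R A φ L) (u : UCE φ S → L) : Prop :=
  (∀ ξ η, u (ξ + η) = u ξ + u η) ∧
  (∀ (a : A) (ξ : UCE φ S), u (a • ξ) = a • u ξ) ∧
  (∀ (a : A) (x y : L), u (uceMk φ S a x y) = a • S.bracket x y)

end UceDefs

section MoreDefs

variable {R A : Type} [CommRing R] [CommRing A] [Algebra R A] (φ : A →ₐ[R] A)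

/-- `F` is the homomorphism `uce^φ_A(f)` induced by `f` on universal central extensions. -/
def IsUceFunctorMap {K L : Type}
    [AddCommGroup K] [Module R K] [Module A K] [IsScalarTower R A K]
    [AddCommGroup L] [Module R L] [Module A L] [IsScalarTower R A L]
    (SK : HLR R A φ K) (SL : HLR R A φ L)
    (UK : HLR R A φ (UCE φ SK)) (UL : HLR R A φ (UCE φ SL))
    (f : K → L) (F : UCE φ SK → UCE φ SL) : Prop :=
  IsHLRHom UK UL F ∧
  ∀ (a : A) (x y : K), F (uceMk φ SK a x y) = uceMk φ SL a (f x) (f y)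

/-- `D` is an `α`-derivation of `(L, α_L)` with symbol `σD`. -/
def IsAlphaDeriv {L : Type}
    [AddCommGroup L] [Module R L] [Module A L] [IsScalarTower R A L]
    (S : HLR R A φ L) (D : L → L) (σD : A → A) : Prop :=
  (∀ x y, D (x + y) = D x + D y) ∧
  (∀ (r : R) (x : L), D (r • x) = r • D x) ∧
  (∀ a b, σD (a + b) = σD a + σD b) ∧
  (∀ (r : R) (a : A), σD (r • a) = r • σD a) ∧
  (∀ a b, σD (a * b) = φ a * σD b + φ b * σD a) ∧
  (∀ x, D (S.alpha x) = S.alpha (D x)) ∧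
  (∀ x y, D (S.bracket x y) = S.bracket (D x) (S.alpha y) + S.bracket (S.alpha x) (D y)) ∧
  (∀ a, σD (φ a) = φ (σD a)) ∧
  (∀ (a : A) (x : L), D (a • x) = φ a • D x + σD a • S.alpha x) ∧
  (∀ (x : L) (a : A), σD (S.rho x a) = S.rho (S.alpha x) (σD a) + S.rho (D x) (φ a))

/-- A quasi hom-action of `(L, α_L)` on `(M, α_M)`. -/
def IsQuasiHomAction {L M : Type}
    [AddCommGroup L] [Module R L] [Module A L] [IsScalarTower R A L]
    [AddCommGroup M] [Module R M] [Module A M] [IsScalarTower R A M]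
    (SL : HLR R A φ L) (SM : HLR R A φ M) (act : L → M → M) : Prop :=
  (∀ (x : L) (a : A) (m : M),
      act x (a • m) = φ a • act x m + SL.rho x a • SM.alpha m) ∧
  (∀ (x y : L) (m : M),
      act (SL.bracket x y) (SM.alpha m)
        = act (SL.alpha x) (act y m) - act (SL.alpha y) (act x m)) ∧
  (∀ (x : L) (m n : M),
      act (SL.alpha x) (SM.bracket m n)
        = SM.bracket (act x m) (SM.alpha n) + SM.bracket (SM.alpha m) (act x n)) ∧
  (∀ (x : L) (m : M) (a : A),
      SM.rho (act x m) (φ a)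
        = SL.rho (SL.alpha x) (SM.rho m a) - SM.rho (SM.alpha m) (SL.rho x a)) ∧
  (∀ (x : L) (m : M), SM.alpha (act x m) = act (SL.alpha x) (SM.alpha m))

/-- Compatibility of two quasi hom-actions on each other. -/
def AreCompatibleActions {L M : Type}
    [AddCommGroup L] [Module R L] [Module A L] [IsScalarTower R A L]
    [AddCommGroup M] [Module R M] [Module A M] [IsScalarTower R A M]
    (SL : HLR R A φ L) (SM : HLR R A φ M)
    (actLM : L → M → M) (actML : M → L → L) : Prop :=
  (∀ (x : L) (m : M) (a : A), SM.rho (actLM x m) a = - SL.rho (actML m x) a) ∧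
  (∀ (m : M) (x : L) (n : M), actLM (actML m x) n = SM.bracket n (actLM x m)) ∧
  (∀ (x : L) (m : M) (y : L), actML (actLM x m) y = SL.bracket y (actML m x))

end MoreDefs

section StarDefs

variable {R A : Type} [CommRing R] [CommRing A] [Algebra R A] (φ : A →ₐ[R] A)
variable {L M : Type}
  [AddCommGroup L] [Module R L] [Module A L] [IsScalarTower R A L]
  [AddCommGroup M] [Module R M] [Module A M] [IsScalarTower R A M]

/-- The `A`-submodule of defining relations of the non-abelian tensor product `L ∗ M`,
inside the free `A`-module on the symbols `x ∗ m`. -/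
noncomputable def starRel (SL : HLR R A φ L) (SM : HLR R A φ M)
    (actLM : L → M → M) (actML : M → L → L) : Submodule A ((L × M) →₀ A) :=
  Submodule.span A
    ({t | ∃ (x y : L) (m : M), t =
        Finsupp.single (x + y, m) (1 : A) - Finsupp.single (x, m) 1
          - Finsupp.single (y, m) 1} ∪
     {t | ∃ (r : R) (x : L) (m : M), t =
        Finsupp.single (r • x, m) (1 : A) - r • Finsupp.single (x, m) (1 : A)} ∪
     {t | ∃ (x : L) (m n : M), t =
        Finsupp.single (x, m + n) (1 : A) - Finsupp.single (x, m) 1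
          - Finsupp.single (x, n) 1} ∪
     {t | ∃ (r : R) (x : L) (m : M), t =
        Finsupp.single (x, r • m) (1 : A) - r • Finsupp.single (x, m) (1 : A)} ∪
     {t | ∃ (x y : L) (m : M), t =
        Finsupp.single (SL.bracket x y, SM.alpha m) (1 : A)
          - Finsupp.single (SL.alpha x, actLM y m) 1
          + Finsupp.single (SL.alpha y, actLM x m) 1} ∪
     {t | ∃ (x : L) (m n : M), t =
        Finsupp.single (SL.alpha x, SM.bracket m n) (1 : A)
          - Finsupp.single (actML n x, SM.alpha m) 1
          + Finsupp.single (actML m x, SM.alpha n) 1} ∪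
     {t | ∃ (a b : A) (x y : L) (m n : M), t =
        Finsupp.single (a • actML m x, b • actLM y n) (1 : A)
          + Finsupp.single (b • actML n y, a • actLM x m) 1} ∪
     {t | ∃ (a b : A) (x y : L) (m n : M), t =
        Finsupp.single (a • actML m x, b • actLM y n) (1 : A)
          - φ (a * b) • Finsupp.single (actML m x, actLM y n) (1 : A)
          + (φ a * SM.rho (actLM x m) b) • Finsupp.single (SL.alpha y, SM.alpha n) (1 : A)
          - (φ b * SM.rho (actLM y n) a) • Finsupp.single (SL.alpha x, SM.alpha m) (1 : A)})

/-- The underlying `A`-module of the non-abelian tensor product `L ∗ M`. -/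
abbrev StarMod (SL : HLR R A φ L) (SM : HLR R A φ M)
    (actLM : L → M → M) (actML : M → L → L) : Type :=
  ((L × M) →₀ A) ⧸ starRel φ SL SM actLM actML

/-- The generator `x ∗ m` of `L ∗ M`. -/
noncomputable def starMk (SL : HLR R A φ L) (SM : HLR R A φ M)
    (actLM : L → M → M) (actML : M → L → L) (x : L) (m : M) :
    StarMod φ SL SM actLM actML :=
  Submodule.Quotient.mk (Finsupp.single (x, m) (1 : A))

/-- `U` is the hom-Lie-Rinehart structure of the non-abelian tensor product `L ∗ M`. -/
def IsStarStructure (SL : HLR R A φ L) (SM : HLR R A φ M)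
    (actLM : L → M → M) (actML : M → L → L)
    (U : HLR R A φ (StarMod φ SL SM actLM actML)) : Prop :=
  (∀ (x : L) (m : M),
      U.alpha (starMk φ SL SM actLM actML x m)
        = starMk φ SL SM actLM actML (SL.alpha x) (SM.alpha m)) ∧
  (∀ (a b : A) (x y : L) (m n : M),
      U.bracket (a • starMk φ SL SM actLM actML x m)
          (b • starMk φ SL SM actLM actML y n)
        = - starMk φ SL SM actLM actML (a • actML m x) (b • actLM y n)) ∧
  (∀ (x : L) (m : M) (a : A),
      U.rho (starMk φ SL SM actLM actML x m) a = SM.rho (actLM x m) a)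

/-- A hom-Lie-Rinehart pairing of `(L, α_L)` and `(M, α_M)` into `(N, α_N)`. -/
def IsHLRPairing {N : Type}
    [AddCommGroup N] [Module R N] [Module A N] [IsScalarTower R A N]
    (SL : HLR R A φ L) (SM : HLR R A φ M) (SN : HLR R A φ N)
    (actLM : L → M → M) (actML : M → L → L) (f : L → M → N) : Prop :=
  (∀ (x y : L) (m : M), f (x + y) m = f x m + f y m) ∧
  (∀ (r : R) (x : L) (m : M), f (r • x) m = r • f x m) ∧
  (∀ (x : L) (m n : M), f x (m + n) = f x m + f x n) ∧
  (∀ (r : R) (x : L) (m : M), f x (r • m) = r • f x m) ∧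
  (∀ (x : L) (m : M) (a : A), SN.rho (f x m) a = SM.rho (actLM x m) a) ∧
  (∀ (x y : L) (m : M),
      f (SL.bracket x y) (SM.alpha m)
        = f (SL.alpha x) (actLM y m) - f (SL.alpha y) (actLM x m)) ∧
  (∀ (x : L) (m n : M),
      f (SL.alpha x) (SM.bracket m n)
        = f (actML n x) (SM.alpha m) - f (actML m x) (SM.alpha n)) ∧
  (∀ (x : L) (m : M), f (SL.alpha x) (SM.alpha m) = SN.alpha (f x m)) ∧
  (∀ (a b : A) (x y : L) (m n : M),
      f (a • actML m x) (b • actLM y n)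
        = - (φ (a * b) • SN.bracket (f x m) (f y n))
          - (φ a * SN.rho (f x m) b) • SN.alpha (f y n)
          + (φ b * SN.rho (f y n) a) • SN.alpha (f x m))

end StarDefs

namespace HLR

variable {R A : Type} [CommRing R] [CommRing A] [Algebra R A] {φ : A →ₐ[R] A}
variable {L : Type} [AddCommGroup L] [Module R L] [Module A L] [IsScalarTower R A L]
  (S : HLR R A φ L)

lemma bracket_zero_left (z : L) : S.bracket 0 z = 0 := by
  simpa using S.add_left 0 0 z

lemma bracket_zero_right (z : L) : S.bracket z 0 = 0 := by
  simpa using S.add_right z 0 0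

lemma alpha_zero : S.alpha 0 = 0 := by
  simpa using S.alpha_add 0 0

variable {S}

lemma bracket_eq_zero_of_mem_center_left {x : L} (hx : x ∈ S.center) (z : L) :
    S.bracket x z = 0 := by
  simpa using (hx 1 z).1

lemma bracket_eq_zero_of_mem_center_right {x : L} (hx : x ∈ S.center) (z : L) :
    S.bracket z x = 0 := by
  rw [S.skew, bracket_eq_zero_of_mem_center_left hx, neg_zero]

lemma rho_eq_zero_of_mem_center {x : L} (hx : x ∈ S.center) (a : A) : S.rho x a = 0 :=
  (hx a 0).2.2

variable (S)

def alphaₛₗ : L →ₛₗ[(φ : A →+* A)] L where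
  toFun := S.alpha
  map_add' := S.alpha_add
  map_smul' := S.alpha_smulA

def bracketSpan : Submodule A L :=
  Submodule.span A {z | ∃ x y, z = S.bracket x y}

lemma isPerfect_iff : S.IsPerfect ↔ S.bracketSpan = ⊤ := Iff.rfl

lemma bracket_mem_bracketSpan (x y : L) : S.bracket x y ∈ S.bracketSpan :=
  Submodule.subset_span ⟨x, y, rfl⟩

lemma bracketSpan_le_comap_alpha : S.bracketSpan ≤ S.bracketSpan.comap S.alphaₛₗ :=
  Submodule.span_le.mpr <| by
    rintro _ ⟨x, y, rfl⟩
    show S.alpha (S.bracket x y) ∈ S.bracketSpan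
    exact S.alpha_bracket x y ▸ S.bracket_mem_bracketSpan _ _

def alphaAb : L ⧸ S.bracketSpan →ₛₗ[(φ : A →+* A)] L ⧸ S.bracketSpan :=
  S.bracketSpan.mapQ S.bracketSpan S.alphaₛₗ S.bracketSpan_le_comap_alpha

lemma alphaAb_mk (x : L) :
    S.alphaAb (Submodule.Quotient.mk x) = Submodule.Quotient.mk (S.alpha x) := rfl

lemma alphaAb_smulR (r : R) (q : L ⧸ S.bracketSpan) :
    S.alphaAb (r • q) = r • S.alphaAb q := by
  induction q using Submodule.Quotient.induction_on with
  | H x =>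
    rw [← Submodule.Quotient.mk_smul, alphaAb_mk, alphaAb_mk, S.alpha_smulR,
      Submodule.Quotient.mk_smul]

/-- The Leibniz rule `[x, a • y] = φ a • [x, y] + ρ x a • α y` puts `ρ x a • α y` in
`{L, L}`. -/
lemma rho_smul_alphaAb (x : L) (a : A) (q : L ⧸ S.bracketSpan) :
    S.rho x a • S.alphaAb q = 0 := by
  induction q using Submodule.Quotient.induction_on with
  | H y =>
    rw [alphaAb_mk, ← Submodule.Quotient.mk_smul]
    refine (Submodule.Quotient.mk_eq_zero _).mpr ?_
    have h : S.rho x a • S.alpha y = S.bracket x (a • y) - φ a • S.bracket x y := by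
      rw [S.leibniz]; abel
    exact h ▸ Submodule.sub_mem _ (S.bracket_mem_bracketSpan _ _)
      (Submodule.smul_mem _ _ (S.bracket_mem_bracketSpan _ _))

def prodAb : HLR R A φ (L × (L ⧸ S.bracketSpan)) where
  bracket x y := (S.bracket x.1 y.1, 0)
  add_left x y z := by simp [S.add_left]
  add_right x y z := by simp [S.add_right]
  smul_left r x y := by simp [S.smul_left]
  smul_right r x y := by simp [S.smul_right]
  skew x y := by simp [S.skew x.1 y.1]
  alpha x := (S.alpha x.1, S.alphaAb x.2)
  alpha_add x y := by simp [S.alpha_add]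
  alpha_smulR r x := by simp [S.alpha_smulR, S.alphaAb_smulR]
  rho x a := S.rho x.1 a
  rho_add_left x y a := S.rho_add_left x.1 y.1 a
  rho_smulR_left r x a := S.rho_smulR_left r x.1 a
  rho_add_right x a b := S.rho_add_right x.1 a b
  rho_smulR_right x r a := S.rho_smulR_right x.1 r a
  rho_deriv x a b := S.rho_deriv x.1 a b
  alpha_bracket x y := by simp [S.alpha_bracket]
  hom_jacobi x y z := Prod.ext (S.hom_jacobi x.1 y.1 z.1) (by simp)
  alpha_smulA a x := by simp [S.alpha_smulA]
  rho_alpha x a := S.rho_alpha x.1 a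
  rho_bracket x y a := S.rho_bracket x.1 y.1 a
  rho_smulA a x b := S.rho_smulA a x.1 b
  leibniz x a y := Prod.ext (S.leibniz x.1 a y.1) (by simp [S.rho_smul_alphaAb])

lemma mem_center_prodAb {x : L × (L ⧸ S.bracketSpan)} (hx : x.1 ∈ S.center) :
    x ∈ S.prodAb.center := fun a z =>
  ⟨Prod.ext (hx a z.1).1 rfl, Prod.ext (hx a z.1).2.1 rfl, (hx a z.1).2.2⟩

def restrict (p : Submodule A L) (hb : ∀ x ∈ p, ∀ y ∈ p, S.bracket x y ∈ p)
    (ha : ∀ x ∈ p, S.alpha x ∈ p) : HLR R A φ p where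
  bracket x y := ⟨S.bracket x y, hb x x.2 y y.2⟩
  add_left x y z := Subtype.ext (S.add_left x y z)
  add_right x y z := Subtype.ext (S.add_right x y z)
  smul_left r x y := Subtype.ext (S.smul_left r x y)
  smul_right r x y := Subtype.ext (S.smul_right r x y)
  skew x y := Subtype.ext (S.skew x y)
  alpha x := ⟨S.alpha x, ha x x.2⟩
  alpha_add x y := Subtype.ext (S.alpha_add x y)
  alpha_smulR r x := Subtype.ext (S.alpha_smulR r x)
  rho x a := S.rho x a
  rho_add_left x y a := S.rho_add_left x y a
  rho_smulR_left r x a := S.rho_smulR_left r x a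
  rho_add_right x a b := S.rho_add_right x a b
  rho_smulR_right x r a := S.rho_smulR_right x r a
  rho_deriv x a b := S.rho_deriv x a b
  alpha_bracket x y := Subtype.ext (S.alpha_bracket x y)
  hom_jacobi x y z := Subtype.ext (S.hom_jacobi x y z)
  alpha_smulA a x := Subtype.ext (S.alpha_smulA a x)
  rho_alpha x a := S.rho_alpha x a
  rho_bracket x y a := S.rho_bracket x y a
  rho_smulA a x b := S.rho_smulA a x b
  leibniz x a y := Subtype.ext (S.leibniz x a y)

end HLR

section Homs

variable {R A : Type} [CommRing R] [CommRing A] [Algebra R A] {φ : A →ₐ[R] A}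
variable {K L N : Type}
  [AddCommGroup K] [Module R K] [Module A K] [IsScalarTower R A K]
  [AddCommGroup L] [Module R L] [Module A L] [IsScalarTower R A L]
  [AddCommGroup N] [Module R N] [Module A N] [IsScalarTower R A N]
  {SK : HLR R A φ K} {SL : HLR R A φ L} {SN : HLR R A φ N} {f : K → L}

namespace IsHLRHom

lemma id (S : HLR R A φ K) : IsHLRHom S S fun x => x :=
  ⟨fun _ _ => rfl, fun _ _ => rfl, fun _ _ => rfl, fun _ => rfl, fun _ _ => rfl⟩

lemma comp {g : L → N} (hf : IsHLRHom SK SL f) (hg : IsHLRHom SL SN g) :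
    IsHLRHom SK SN fun x => g (f x) :=
  ⟨fun x y => by simp only [hf.1, hg.1], fun a x => by simp only [hf.2.1, hg.2.1],
    fun x y => by simp only [hf.2.2.1, hg.2.2.1], fun x => by simp only [hf.2.2.2.1, hg.2.2.2.1],
    fun x a => by simp only [hg.2.2.2.2, hf.2.2.2.2]⟩

def toLinearMap (hf : IsHLRHom SK SL f) : K →ₗ[A] L where
  toFun := f
  map_add' := hf.1
  map_smul' := hf.2.1

lemma map_bracket_eq_zero (hf : IsHLRHom SK SL f) {x : K} (hx : f x = 0) (y : K) :
    f (SK.bracket x y) = 0 := by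
  rw [hf.2.2.1, hx, SL.bracket_zero_left]

lemma map_alpha_eq_zero (hf : IsHLRHom SK SL f) {x : K} (hx : f x = 0) :
    f (SK.alpha x) = 0 := by
  rw [hf.2.2.2.1, hx, SL.alpha_zero]

lemma map_smul_eq_zero (hf : IsHLRHom SK SL f) {x : K} (hx : f x = 0) (a : A) :
    f (a • x) = 0 := by
  rw [hf.2.1, hx, smul_zero]

def kerHLR (hf : IsHLRHom SK SL f) : HLR R A φ (LinearMap.ker hf.toLinearMap) :=
  SK.restrict _ (fun _ hx y _ => hf.map_bracket_eq_zero hx y)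
    (fun _ hx => hf.map_alpha_eq_zero hx)

lemma isAlphaCentralExt_kerHLR (hf : IsHLRHom SK SL f) (hsurj : Surjective f)
    (hcent : ∀ x, f x = 0 → SK.alpha x ∈ SK.center) :
    IsAlphaCentralExt hf.kerHLR SK SL Subtype.val f :=
  ⟨⟨fun _ _ => rfl, fun _ _ => rfl, fun _ _ => rfl, fun _ => rfl, fun _ _ => rfl⟩, hf,
    Subtype.val_injective, hsurj, Subtype.range_coe, fun m => hcent m m.2⟩

end IsHLRHom

namespace HLR

lemma isHLRHom_fst (S : HLR R A φ K) : IsHLRHom S.prodAb S Prod.fst :=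
  ⟨fun _ _ => rfl, fun _ _ => rfl, fun _ _ => rfl, fun _ => rfl, fun _ _ => rfl⟩

lemma isHLRHom_inl (S : HLR R A φ K) :
    IsHLRHom S S.prodAb fun x => (x, (0 : K ⧸ S.bracketSpan)) :=
  ⟨fun x y => by simp, fun a x => by simp, fun _ _ => rfl, fun x => by simp [HLR.prodAb],
    fun _ _ => rfl⟩

lemma isHLRHom_graph_mk (S : HLR R A φ K) :
    IsHLRHom S S.prodAb fun x => (x, (Submodule.Quotient.mk x : K ⧸ S.bracketSpan)) :=
  ⟨fun x y => by simp, fun a x => by simp,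
    fun x y => Prod.ext rfl
      ((Submodule.Quotient.mk_eq_zero _).mpr (S.bracket_mem_bracketSpan x y)),
    fun _ => rfl, fun _ _ => rfl⟩

end HLR

end Homs

section Extensions

variable {R A : Type} [CommRing R] [CommRing A] [Algebra R A] {φ : A →ₐ[R] A}
variable {M K L : Type}
  [AddCommGroup M] [Module R M] [Module A M] [IsScalarTower R A M]
  [AddCommGroup K] [Module R K] [Module A K] [IsScalarTower R A K]
  [AddCommGroup L] [Module R L] [Module A L] [IsScalarTower R A L]
  {SM : HLR R A φ M} {SK : HLR R A φ K} {SL : HLR R A φ L} {i : M → K} {σ : K → L}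

namespace IsCentralExt

lemma alpha_mem_center (hext : IsCentralExt SM SK SL i σ) {k : K} (hk : σ k = 0) :
    SK.alpha k ∈ SK.center :=
  hext.2.2.2.2.2 (hext.2.1.map_alpha_eq_zero hk)

lemma isAlphaCentralExt (hext : IsCentralExt SM SK SL i σ) : IsAlphaCentralExt SM SK SL i σ :=
  ⟨hext.1, hext.2.1, hext.2.2.1, hext.2.2.2.1, hext.2.2.2.2.1, fun m =>
    hext.1.2.2.2.1 m ▸ hext.alpha_mem_center (hext.2.2.2.2.1.subset ⟨m, rfl⟩)⟩

end IsCentralExt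

namespace IsUniversalAlphaCentralExt

lemma lift_unique (huniv : IsUniversalAlphaCentralExt SM SK SL i σ)
    {M' L' : Type}
    [AddCommGroup M'] [Module R M'] [Module A M'] [IsScalarTower R A M']
    [AddCommGroup L'] [Module R L'] [Module A L'] [IsScalarTower R A L']
    {SM' : HLR R A φ M'} {SL' : HLR R A φ L'} {j : M' → L'} {τ : L' → L}
    (hext : IsAlphaCentralExt SM' SL' SL j τ) {h₁ h₂ : K → L'}
    (hh₁ : IsHLRHom SK SL' h₁) (hh₂ : IsHLRHom SK SL' h₂)
    (hτh₁ : ∀ x, τ (h₁ x) = σ x) (hτh₂ : ∀ x, τ (h₂ x) = σ x) : h₁ = h₂ :=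
  (huniv.2 M' L' SM' SL' j τ hext).unique ⟨hh₁, hτh₁⟩ ⟨hh₂, hτh₂⟩

lemma isPerfect (huniv : IsUniversalAlphaCentralExt SM SK SL i σ) : SK.IsPerfect := by
  have hσ := huniv.1.2.1
  have hext : IsAlphaCentralExt _ SK.prodAb SL Subtype.val fun p => σ p.1 :=
    (SK.isHLRHom_fst.comp hσ).isAlphaCentralExt_kerHLR
      (huniv.1.2.2.2.1.comp Prod.fst_surjective)
      (fun p hp => SK.mem_center_prodAb (huniv.1.alpha_mem_center hp))
  have hlifts := huniv.lift_unique hext SK.isHLRHom_inl SK.isHLRHom_graph_mk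
    (fun _ => rfl) (fun _ => rfl)
  refine (SK.isPerfect_iff).mpr (eq_top_iff.mpr fun x _ => ?_)
  exact (Submodule.Quotient.mk_eq_zero _).mp (congrArg Prod.snd (congrFun hlifts x)).symm

end IsUniversalAlphaCentralExt

end Extensions

section CentralExtensionsOfPerfect

variable {R A : Type} [CommRing R] [CommRing A] [Algebra R A] {φ : A →ₐ[R] A}
variable {M N L' K L : Type}
  [AddCommGroup M] [Module R M] [Module A M] [IsScalarTower R A M]
  [AddCommGroup N] [Module R N] [Module A N] [IsScalarTower R A N]
  [AddCommGroup L'] [Module R L'] [Module A L'] [IsScalarTower R A L']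
  [AddCommGroup K] [Module R K] [Module A K] [IsScalarTower R A K]
  [AddCommGroup L] [Module R L] [Module A L] [IsScalarTower R A L]
  {SM : HLR R A φ M} {SN : HLR R A φ N} {SL' : HLR R A φ L'} {SK : HLR R A φ K}
  {SL : HLR R A φ L} {i : M → K} {σ : K → L} {j : N → L'} {τ : L' → K}

lemma IsHLRHom.rho_alpha_eq_zero (hφ : Surjective φ) (hτ : IsHLRHom SL' SK τ) {x : L'}
    (hx : τ x ∈ SK.center) (b : A) : SL'.rho (SL'.alpha x) b = 0 := by
  obtain ⟨a, rfl⟩ := hφ b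
  rw [SL'.rho_alpha, ← hτ.2.2.2.2, HLR.rho_eq_zero_of_mem_center hx, map_zero]

lemma IsHLRHom.bracketSpan_sup_ker_eq_top (hτ : IsHLRHom SL' SK τ) (hsurj : Surjective τ)
    (hperf : SK.IsPerfect) : SL'.bracketSpan ⊔ LinearMap.ker hτ.toLinearMap = ⊤ := by
  refine (LinearMap.map_eq_top_iff (LinearMap.range_eq_top.mpr hsurj)).mp ?_
  rw [← SK.isPerfect_iff.mp hperf, HLR.bracketSpan, HLR.bracketSpan, Submodule.map_span]
  congr 1
  ext k
  constructor
  · rintro ⟨_, ⟨u, v, rfl⟩, rfl⟩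
    exact ⟨τ u, τ v, hτ.2.2.1 u v⟩
  · rintro ⟨u, v, rfl⟩
    obtain ⟨u, rfl⟩ := hsurj u
    obtain ⟨v, rfl⟩ := hsurj v
    exact ⟨_, ⟨u, v, rfl⟩, hτ.2.2.1 u v⟩

namespace IsCentralExt

/-- Both `[v, x]` and `[x, u]` lie in `ker τ`, which is central, so hom-Jacobi leaves one term. -/
lemma bracket_alpha_bracket_eq_zero (hτ : IsCentralExt SN SL' SK j τ) {x : L'}
    (hx : τ x ∈ SK.center) (u v : L') : SL'.bracket (SL'.alpha x) (SL'.bracket u v) = 0 := by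
  have hvx : SL'.bracket v x ∈ SL'.center := hτ.2.2.2.2.2 <| show τ _ = 0 by
    rw [hτ.2.1.2.2.1, HLR.bracket_eq_zero_of_mem_center_right hx]
  have hxu : SL'.bracket x u ∈ SL'.center := hτ.2.2.2.2.2 <| show τ _ = 0 by
    rw [hτ.2.1.2.2.1, HLR.bracket_eq_zero_of_mem_center_left hx]
  have hjacobi := SL'.hom_jacobi x u v
  rwa [HLR.bracket_eq_zero_of_mem_center_right hvx, HLR.bracket_eq_zero_of_mem_center_right hxu,
    add_zero, add_zero] at hjacobi

lemma bracket_alpha_eq_zero (hφ : Surjective φ) (hτ : IsCentralExt SN SL' SK j τ)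
    (hperf : SK.IsPerfect) {x : L'} (hx : τ x ∈ SK.center) (z : L') :
    SL'.bracket (SL'.alpha x) z = 0 := by
  have hspan : ∀ y ∈ SL'.bracketSpan, SL'.bracket (SL'.alpha x) y = 0 := by
    intro y hy
    induction hy using Submodule.span_induction with
    | mem _ h =>
      obtain ⟨u, v, rfl⟩ := h
      exact hτ.bracket_alpha_bracket_eq_zero hx u v
    | zero => exact SL'.bracket_zero_right _
    | add _ _ _ _ ih₁ ih₂ => rw [SL'.add_right, ih₁, ih₂, add_zero]
    | smul a _ _ ih =>
      rw [SL'.leibniz, ih, smul_zero, hτ.2.1.rho_alpha_eq_zero hφ hx, zero_smul, add_zero]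
  have hz : z ∈ SL'.bracketSpan ⊔ LinearMap.ker hτ.2.1.toLinearMap := by
    rw [hτ.2.1.bracketSpan_sup_ker_eq_top hτ.2.2.2.1 hperf]
    trivial
  obtain ⟨y, hy, k, hk, rfl⟩ := Submodule.mem_sup.mp hz
  rw [SL'.add_right, hspan y hy, HLR.bracket_eq_zero_of_mem_center_right (hτ.2.2.2.2.2 hk),
    add_zero]

lemma alpha_mem_center_of_comp (hφ : Surjective φ) (hτ : IsCentralExt SN SL' SK j τ)
    (hσ : IsCentralExt SM SK SL i σ) (hperf : SK.IsPerfect) {x : L'} (hx : σ (τ x) = 0) :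
    SL'.alpha x ∈ SL'.center := by
  have hστ := hτ.2.1.comp hσ.2.1
  intro b z
  obtain ⟨a, rfl⟩ := hφ b
  refine ⟨?_, ?_, hτ.2.1.rho_alpha_eq_zero hφ (hσ.2.2.2.2.2 hx) _⟩
  · rw [← SL'.alpha_smulA]
    exact hτ.bracket_alpha_eq_zero hφ hperf (hσ.2.2.2.2.2 (hστ.map_smul_eq_zero hx a)) z
  · rw [← SL'.alpha_smulA]
    exact hτ.bracket_alpha_eq_zero hφ hperf
      (hσ.2.2.2.2.2 (hστ.map_smul_eq_zero (hστ.map_alpha_eq_zero hx) a)) z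

lemma isAlphaCentralExt_comp (hφ : Surjective φ) (hτ : IsCentralExt SN SL' SK j τ)
    (hσ : IsCentralExt SM SK SL i σ) (hperf : SK.IsPerfect) :
    IsAlphaCentralExt (hτ.2.1.comp hσ.2.1).kerHLR SL' SL Subtype.val fun x => σ (τ x) :=
  (hτ.2.1.comp hσ.2.1).isAlphaCentralExt_kerHLR (hσ.2.2.2.1.comp hτ.2.2.2.1)
    fun _ hx => hτ.alpha_mem_center_of_comp hφ hσ hperf hx

end IsCentralExt

end CentralExtensionsOfPerfect

theorem statement_7_general
    {R A : Type} [CommRing R] [CommRing A] [Algebra R A] (φ : A →ₐ[R] A)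
    (hφ : Function.Surjective ⇑φ)
    {M K L : Type}
    [AddCommGroup M] [Module R M] [Module A M] [IsScalarTower R A M]
    [AddCommGroup K] [Module R K] [Module A K] [IsScalarTower R A K]
    [AddCommGroup L] [Module R L] [Module A L] [IsScalarTower R A L]
    (SM : HLR R A φ M) (SK : HLR R A φ K) (SL : HLR R A φ L)
    (i : M → K) (σ : K → L)
    (huniv : IsUniversalAlphaCentralExt SM SK SL i σ) :
    SK.IsPerfect ∧
    ∀ (N L' : Type)
      [AddCommGroup N] [Module R N] [Module A N] [IsScalarTower R A N]
      [AddCommGroup L'] [Module R L'] [Module A L'] [IsScalarTower R A L']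
      (SN : HLR R A φ N) (SL' : HLR R A φ L') (j : N → L') (τ : L' → K),
      IsCentralExt SN SL' SK j τ →
      ∃! s : K → L', IsHLRHom SK SL' s ∧ ∀ x, τ (s x) = x := by
  have hperf := huniv.isPerfect
  refine ⟨hperf, fun N L' _ _ _ _ _ _ _ _ SN SL' j τ hτ => ?_⟩
  have hστ := hτ.isAlphaCentralExt_comp hφ huniv.1 hperf
  obtain ⟨s, ⟨hs, hτs⟩, -⟩ := huniv.2 _ _ _ _ _ _ hστ
  have hτs_id : (fun x => τ (s x)) = fun x => x :=
    huniv.lift_unique huniv.1.isAlphaCentralExt (hs.comp hτ.2.1) (IsHLRHom.id SK) hτs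
      fun _ => rfl
  exact ⟨s, ⟨hs, congrFun hτs_id⟩, fun s' ⟨hs', hτs'⟩ =>
    huniv.lift_unique hστ hs' hs (fun x => congrArg σ (hτs' x)) hτs⟩

/-- if a central extension of `(L, α_L)` is a universal `α`-central extension,
then the middle algebra `(K, α_K)` is perfect and every central extension of `(K, α_K)`
splits uniquely (`φ` surjective). -/
theorem statement_7
    {R A : Type} [CommRing R] [CommRing A] [Algebra R A] (φ : A →ₐ[R] A)
    (hφ : Function.Surjective ⇑φ)
    {M K L : Type}
    [AddCommGroup M] [Module R M] [Module A M] [IsScalarTower R A M]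
    [AddCommGroup K] [Module R K] [Module A K] [IsScalarTower R A K]
    [AddCommGroup L] [Module R L] [Module A L] [IsScalarTower R A L]
    (SM : HLR R A φ M) (SK : HLR R A φ K) (SL : HLR R A φ L)
    (i : M → K) (σ : K → L)
    (hce : IsCentralExt SM SK SL i σ)
    (huniv : IsUniversalAlphaCentralExt SM SK SL i σ) :
    SK.IsPerfect ∧
    ∀ (N L' : Type)
      [AddCommGroup N] [Module R N] [Module A N] [IsScalarTower R A N]
      [AddCommGroup L'] [Module R L'] [Module A L'] [IsScalarTower R A L']
      (SN : HLR R A φ N) (SL' : HLR R A φ L') (j : N → L') (τ : L' → K),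
      IsCentralExt SN SL' SK j τ →
      ∃! s : K → L', IsHLRHom SK SL' s ∧ ∀ x, τ (s x) = x :=
  statement_7_general φ hφ SM SK SL i σ huniv
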